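/- Let B be a left semi-brace. Then B^n is a left ideal of B, for every positive integer n. -/
import Mathlib


/-- A left semi-brace: `(B,+)` is a left cancellative semigroup, `(B,*)` is a group
(whose identity `1` plays the role of `0` in the additive notation of the paper, and
`a⁻¹` plays the role of `a⁻`), and `a ∘ (b + c) = a ∘ b + a ∘ (a⁻ + c)` holds. -/
class LeftSemiBrace (B : Type*) extends Group B, Add B where
  add_assoc : ∀ a b c : B, a + b + c = a + (b + c)
  add_left_cancel : ∀ a b c : B, a + b = a + c → b = c
  circ_add : ∀ a b c : B, a * (b + c) = a * b + a * (a⁻¹ + c)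

namespace LeftSemiBrace

variable {B : Type*} [LeftSemiBrace B]

/-- The set `E` of additive idempotents. -/
def E (B : Type*) [LeftSemiBrace B] : Set B := {e | e + e = e}

/-- The set `G = B + 0`. -/
def G (B : Type*) [LeftSemiBrace B] : Set B := {x | ∃ b : B, x = b + 1}

/-- `λ_a (b) = a ∘ (a⁻ + b)`. -/
def lam (a b : B) : B := a * (a⁻¹ + b)

/-- `ρ_b (a) = (a⁻ + b)⁻ ∘ b`. -/
def rho (b a : B) : B := (a⁻¹ + b)⁻¹ * b

/-- `a · b = λ_a(a⁻) + a ∘ b + λ_b(b⁻)`. -/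
def dot (a b : B) : B := lam a a⁻¹ + a * b + lam b b⁻¹

/-- The group part `g_b = b + 0` of an element `b`. -/
def gp (b : B) : B := b + 1

/-- The additive inverse (within the group `(G,+)`) of the group part of an element:
for `g ∈ G` one has `neg g = -g`, since `-g_a = λ_a(a⁻) = a ∘ (a⁻ + a⁻)`. -/
def neg (a : B) : B := a * (a⁻¹ + a⁻¹)

/-- The idempotent part `e_b = -g_b + b` of an element `b`. -/
def ep (b : B) : B := neg (gp b) + b

/-- `S` is a subsemigroup of `(B,+)`. -/
def IsAddSubsemigroup (S : Set B) : Prop := ∀ x ∈ S, ∀ y ∈ S, x + y ∈ S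

/-- `S` is a subgroup of the multiplicative group `(B,∘)`. -/
def IsCircSubgroup (S : Set B) : Prop :=
  (1 : B) ∈ S ∧ (∀ x ∈ S, ∀ y ∈ S, x * y ∈ S) ∧ ∀ x ∈ S, x⁻¹ ∈ S

/-- `S` is a normal subgroup of the multiplicative group `(B,∘)`. -/
def IsCircNormal (S : Set B) : Prop :=
  IsCircSubgroup S ∧ ∀ x ∈ S, ∀ b : B, b * x * b⁻¹ ∈ S

/-- `S` is a subgroup of the group `(G,+)`. -/
def IsAddSubgroupOfG (S : Set B) : Prop :=
  S ⊆ G B ∧ (1 : B) ∈ S ∧ (∀ x ∈ S, ∀ y ∈ S, x + y ∈ S) ∧ ∀ x ∈ S, neg x ∈ S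

/-- `S` is a normal subgroup of the group `(G,+)`. -/
def IsAddNormalSubgroupOfG (S : Set B) : Prop :=
  IsAddSubgroupOfG S ∧ ∀ g ∈ G B, ∀ x ∈ S, g + x + neg g ∈ S

/-- `I` is an ideal of the left semi-brace `B` (Definition 17 of Catino–Colazzo–Stefanelli):
`I` is a subsemigroup of `(B,+)`, a normal subgroup of `(B,∘)`, `I ∩ G` is a normal
subgroup of `(G,+)`, `ρ_b(n) ∈ I` for all `b ∈ B`, `n ∈ I ∩ G`, and `λ_g(e) ∈ I` for all
`g ∈ G`, `e ∈ I ∩ E`. -/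
def IsIdeal (I : Set B) : Prop :=
  IsAddSubsemigroup I ∧ IsCircNormal I ∧ IsAddNormalSubgroupOfG (I ∩ G B) ∧
    (∀ b : B, ∀ n ∈ I ∩ G B, rho b n ∈ I) ∧
    (∀ g ∈ G B, ∀ e ∈ I ∩ E B, lam g e ∈ I)

/-- `I` is a left ideal of the left semi-brace `B`. -/
def IsLeftIdeal (I : Set B) : Prop :=
  (∀ x ∈ I, x + 1 ∈ I) ∧ IsAddSubgroupOfG (I ∩ G B) ∧
    (∀ g ∈ G B, ∀ x ∈ I, lam g x ∈ I) ∧ IsCircSubgroup I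

/-- The subgroup of `(G,+)` generated by a subset `S` of `G`. -/
def addClosure (S : Set B) : Set B :=
  ⋂₀ {T : Set B | S ⊆ T ∧ (1 : B) ∈ T ∧ (∀ x ∈ T, ∀ y ∈ T, x + y ∈ T) ∧ ∀ x ∈ T, neg x ∈ T}

/-- `X · Y`: the subgroup of `(G,+)` generated by `{x · y : x ∈ X, y ∈ Y}`. -/
def dotSet (X Y : Set B) : Set B := addClosure {z | ∃ x ∈ X, ∃ y ∈ Y, z = dot x y}

/-- `S + E = {s + e : s ∈ S, e ∈ E}`. -/
def addE (S : Set B) : Set B := {z | ∃ s ∈ S, ∃ e ∈ E B, z = s + e}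

/-- The right series of `B`: `rightSeries B n = B^(n+1)`, where `B^(1) = B` and
`B^(n+1) = B^(n) · B + E`. -/
def rightSeries (B : Type*) [LeftSemiBrace B] : ℕ → Set B
  | 0 => Set.univ
  | n + 1 => addE (dotSet (rightSeries B n) Set.univ)

/-- The left series of `B`: `leftSeries B n = B^(n+1)`, where `B^1 = B` and
`B^(n+1) = B · B^n + E`. -/
def leftSeries (B : Type*) [LeftSemiBrace B] : ℕ → Set B
  | 0 => Set.univ
  | n + 1 => addE (dotSet Set.univ (leftSeries B n))

/-- The right series of the skew left brace `G`: `rightSeriesG B n = G^(n+1)`, where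
`G^(1) = G` and `G^(n+1) = G^(n) · G`. -/
def rightSeriesG (B : Type*) [LeftSemiBrace B] : ℕ → Set B
  | 0 => G B
  | n + 1 => dotSet (rightSeriesG B n) (G B)

/-- The series `bracketSeries B n = B^[n+1]`, where `B^[1] = B` and `B^[n+1] = H_n + E`
with `H_n` the subgroup of `(G,+)` generated by `⋃_{i=1}^{n} B^[i] · B^[n+1-i]`. -/
def bracketSeries (B : Type*) [LeftSemiBrace B] : ℕ → Set B
  | 0 => Set.univ
  | n + 1 =>
      addE (addClosure (⋃ i : Fin (n + 1),
        dotSet (bracketSeries B i.1) (bracketSeries B (n - i.1))))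
  decreasing_by
  · exact i.isLt
  · exact Nat.lt_succ_of_le (Nat.sub_le n i.1)

/-- The socle `Soc(B) = {a ∈ B : ρ_a = ρ_0, λ_a = λ_0}`. -/
def Soc (B : Type*) [LeftSemiBrace B] : Set B :=
  {a | rho a = rho (1 : B) ∧ lam a = lam (1 : B)}

/-- The generalized socle `Zoc(B) = Soc(B) + E`. -/
def Zoc (B : Type*) [LeftSemiBrace B] : Set B :=
  {z | ∃ a ∈ Soc B, ∃ e ∈ E B, z = a + e}

/-- The lower central series of the group `(G,+)`:  `γ_1 = G` and `γ_{n+1}` is the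
subgroup of `(G,+)` generated by the additive commutators `-x - y + x + y` with
`x ∈ γ_n`, `y ∈ G`. -/
def lowerCentralSeriesG (B : Type*) [LeftSemiBrace B] : ℕ → Set B
  | 0 => G B
  | n + 1 => addClosure
      {z | ∃ x ∈ lowerCentralSeriesG B n, ∃ y ∈ G B, z = neg x + neg y + x + y}

/-- The group `(G,+)` is nilpotent. -/
def IsNilpotentGAdd (B : Type*) [LeftSemiBrace B] : Prop :=
  ∃ n : ℕ, lowerCentralSeriesG B n = {(1 : B)}

/-! ### Auxiliary lemmas -/

theorem aadd (a b c : B) : a + b + c = a + (b + c) := LeftSemiBrace.add_assoc a b c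

theorem acancel {a b c : B} (h : a + b = a + c) : b = c :=
  LeftSemiBrace.add_left_cancel a b c h

theorem one_add (c : B) : (1 : B) + c = c := by
  have h := LeftSemiBrace.circ_add (1 : B) c c
  simp only [one_mul, inv_one] at h
  exact (acancel h).symm

theorem lam_add (a b c : B) : lam a (b + c) = lam a b + lam a c := by
  unfold lam
  rw [← aadd]
  exact LeftSemiBrace.circ_add a (a⁻¹ + b) c

theorem lam_comp (a b c : B) : lam a (lam b c) = lam (a * b) c := by
  unfold lam
  have h : b * (b⁻¹ * a⁻¹ + c) = a⁻¹ + b * (b⁻¹ + c) := by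
    have h2 := LeftSemiBrace.circ_add b (b⁻¹ * a⁻¹) c
    rw [show b * (b⁻¹ * a⁻¹) = a⁻¹ by group] at h2
    exact h2
  rw [mul_inv_rev, mul_assoc, h]

theorem lam_one (c : B) : lam 1 c = c := by
  unfold lam; rw [inv_one, one_mul, one_add]

theorem mul_eq (a c : B) : a * c = a + lam a c := by
  have h := LeftSemiBrace.circ_add a 1 c
  rw [one_add, mul_one] at h
  exact h

theorem add_neg (a : B) : a + neg a = 1 := by
  have h := mul_eq a a⁻¹
  rw [mul_inv_cancel] at h
  exact h.symm

theorem neg_add_one (a : B) : neg a + 1 = neg a := by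
  apply acancel (a := a)
  rw [← aadd, add_neg, one_add]

theorem e_absorb {e : B} (he : e + e = e) (x : B) : e + x = x := by
  apply acancel (a := e)
  rw [← aadd, he]

theorem negadd_mem_E (a : B) : (neg a + a) + (neg a + a) = neg a + a := by
  rw [aadd, ← aadd a (neg a) a, add_neg, one_add]

theorem e_add_one {e : B} (he : e + e = e) : e + 1 = 1 := e_absorb he 1

theorem mem_G_iff {x : B} : x ∈ G B ↔ x + 1 = x := by
  constructor
  · rintro ⟨b, rfl⟩
    rw [aadd, one_add]
  · intro h; exact ⟨x, h.symm⟩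

theorem one_mem_G : (1 : B) ∈ G B := mem_G_iff.mpr (one_add 1)

theorem add_mem_G {x y : B} (hx : x + 1 = x) (hy : y + 1 = y) : (x + y) + 1 = x + y := by
  rw [aadd, hy]

theorem neg_gp (x : B) : neg (x + 1) = neg x := by
  apply acancel (a := x + 1)
  rw [add_neg, aadd, one_add, add_neg]

theorem neg_add_self {g : B} (hg : g + 1 = g) : neg g + g = 1 := by
  apply acancel (a := g)
  rw [← aadd, add_neg, one_add, hg]

theorem eq_neg_of_add {u w : B} (hu : u + 1 = u) (h : u + w = 1) : u = neg w := by
  have h2 : u + (w + neg w) = u + 1 := by rw [add_neg]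
  rw [← aadd, h, one_add] at h2
  rw [hu] at h2
  exact h2.symm

theorem neg_eq_of_add {u w : B} (hu : u + 1 = u) (h : u + w = 1) : w = neg u := by
  have h2 : u + w = u + neg u := by rw [h, add_neg]
  exact acancel h2

theorem lam_inv_one {g : B} (hg : g + 1 = g) : lam g⁻¹ 1 = 1 := by
  unfold lam; rw [inv_inv, hg, inv_mul_cancel]

theorem lam_g_one {g : B} (hg : g + 1 = g) : lam g 1 = 1 := by
  have h := lam_comp g g⁻¹ 1
  rw [lam_inv_one hg, mul_inv_cancel, lam_one] at h
  exact h

theorem lam_gp {g : B} (hg : g + 1 = g) (x : B) : lam g x + 1 = lam g (x + 1) := by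
  rw [lam_add, lam_g_one hg]

theorem lam_neg {g : B} (hg : g + 1 = g) (x : B) : lam g (neg x) = neg (lam g x) := by
  have hgp : (x + 1) + 1 = x + 1 := by rw [aadd, one_add]
  have h1 : lam g (neg x) + lam g (x + 1) = 1 := by
    rw [← lam_add, ← neg_gp x, neg_add_self hgp, lam_g_one hg]
  have h2 : lam g (neg x) + 1 = lam g (neg x) := by
    rw [lam_gp hg, neg_add_one]
  have h3 := eq_neg_of_add h2 h1
  rw [h3, ← lam_gp hg, neg_gp]

theorem neg_def (a : B) : neg a = lam a a⁻¹ := rfl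

theorem dot_eq (a b : B) : dot a b = lam a b + neg b := by
  show lam a a⁻¹ + a * b + lam b b⁻¹ = lam a b + neg b
  rw [← neg_def, ← neg_def, mul_eq a b, ← aadd (neg a) a (lam a b),
    e_absorb (negadd_mem_E a)]

theorem dot_mem_G (a b : B) : dot a b + 1 = dot a b := by
  rw [dot_eq, aadd, neg_add_one]

theorem gp_mul (x y : B) : x * y + 1 = (x + 1) + (dot x y + (y + 1)) := by
  rw [mul_eq x y, dot_eq, aadd (lam x y) (neg y) (y + 1), ← aadd (neg y) y 1,
    e_add_one (negadd_mem_E y), aadd x 1, one_add, ← aadd x (lam x y) 1]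

theorem lam_dot {g : B} (hg : g + 1 = g) (a b : B) :
    lam g (dot a b) = dot (g * a * g⁻¹) (lam g b) := by
  rw [dot_eq, dot_eq, lam_add, lam_comp, lam_neg hg, lam_comp, inv_mul_cancel_right]

theorem mem_addClosure_of_mem {S : Set B} {x : B} (h : x ∈ S) : x ∈ addClosure S :=
  fun _ hT => hT.1 h

theorem one_mem_addClosure (S : Set B) : (1 : B) ∈ addClosure S :=
  fun _ hT => hT.2.1

theorem add_mem_addClosure {S : Set B} {x y : B} (hx : x ∈ addClosure S)
    (hy : y ∈ addClosure S) : x + y ∈ addClosure S :=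
  fun T hT => hT.2.2.1 x (hx T hT) y (hy T hT)

theorem neg_mem_addClosure {S : Set B} {x : B} (hx : x ∈ addClosure S) :
    neg x ∈ addClosure S :=
  fun T hT => hT.2.2.2 x (hx T hT)

theorem addClosure_subset {S T : Set B} (hST : S ⊆ T) (h1 : (1 : B) ∈ T)
    (hadd : ∀ x ∈ T, ∀ y ∈ T, x + y ∈ T) (hneg : ∀ x ∈ T, neg x ∈ T) :
    addClosure S ⊆ T :=
  fun _ hx => hx T ⟨hST, h1, hadd, hneg⟩

theorem addClosure_mono {S S' : Set B} (h : S ⊆ S') : addClosure S ⊆ addClosure S' :=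
  fun _ hx T hT => hx T ⟨h.trans hT.1, hT.2⟩

theorem addClosure_mem_G {S : Set B} (hS : ∀ x ∈ S, x + 1 = x) :
    ∀ x ∈ addClosure S, x + 1 = x := fun x hx =>
  addClosure_subset (T := {x : B | x + 1 = x}) hS (one_add 1)
    (fun a ha b hb => add_mem_G ha hb) (fun a _ => neg_add_one a) hx

theorem mem_addE_of {H : Set B} {z : B} (h : z + 1 ∈ H) : z ∈ addE H := by
  refine ⟨z + 1, h, neg z + z, negadd_mem_E z, ?_⟩
  rw [aadd, one_add, ← aadd, add_neg, one_add]

theorem gp_mem_of_mem_addE {H : Set B} (hH : ∀ x ∈ H, x + 1 = x) {z : B}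
    (h : z ∈ addE H) : z + 1 ∈ H := by
  obtain ⟨s, hs, e, he, rfl⟩ := h
  rw [aadd, e_add_one he, hH s hs]
  exact hs

theorem dotSet_mem_G (X Y : Set B) : ∀ z ∈ dotSet X Y, z + 1 = z := by
  apply addClosure_mem_G
  rintro z ⟨x, -, y, -, rfl⟩
  exact dot_mem_G x y

theorem leftSeries_succ (B : Type*) [LeftSemiBrace B] (n : ℕ) :
    leftSeries B (n + 1) = addE (dotSet Set.univ (leftSeries B n)) := rfl

theorem leftSeries_antitone (n : ℕ) : leftSeries B (n + 1) ⊆ leftSeries B n := by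
  induction n with
  | zero => exact fun x _ => Set.mem_univ x
  | succ n ih =>
    rw [leftSeries_succ, leftSeries_succ]
    rintro z ⟨s, hs, e, he, rfl⟩
    refine ⟨s, ?_, e, he, rfl⟩
    refine addClosure_mono ?_ hs
    rintro w ⟨x, hx, y, hy, rfl⟩
    exact ⟨x, hx, y, ih hy, rfl⟩

/-- `B^n` is a left ideal of `B` for every positive integer `n`
(here `leftSeries B n = B^(n+1)`). -/
theorem leftSeries_isLeftIdeal (B : Type*) [LeftSemiBrace B] (n : ℕ) :
    IsLeftIdeal (leftSeries B n) := by
  induction n with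
  | zero =>
    refine ⟨fun x _ => Set.mem_univ _, ⟨fun x hx => hx.2, ⟨Set.mem_univ _, one_mem_G⟩,
      fun x hx y hy => ⟨Set.mem_univ _,
        mem_G_iff.mpr (add_mem_G (mem_G_iff.mp hx.2) (mem_G_iff.mp hy.2))⟩,
      fun x _ => ⟨Set.mem_univ _, mem_G_iff.mpr (neg_add_one x)⟩⟩,
      fun g _ x _ => Set.mem_univ _,
      ⟨Set.mem_univ _, fun _ _ _ _ => Set.mem_univ _, fun _ _ => Set.mem_univ _⟩⟩
  | succ n ih =>
    obtain ⟨hJ1, hJ2, hJlam, hJcirc⟩ := ih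
    set J := leftSeries B n with hJdef
    set H := dotSet Set.univ J with hHdef
    have hHG : ∀ x ∈ H, x + 1 = x := dotSet_mem_G _ _
    have memI : ∀ z : B, z ∈ leftSeries B (n + 1) ↔ z + 1 ∈ H := by
      intro z
      rw [leftSeries_succ]
      exact ⟨gp_mem_of_mem_addE hHG, mem_addE_of⟩
    have hgen : ∀ x : B, ∀ y ∈ J, dot x y ∈ H :=
      fun x y hy => mem_addClosure_of_mem ⟨x, Set.mem_univ x, y, hy, rfl⟩
    refine ⟨?_, ⟨fun x hx => hx.2, ?_, ?_, ?_⟩, ?_, ?_, ?_, ?_⟩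
    · -- x + 1 ∈ I
      intro x hx
      refine (memI _).mpr ?_
      rw [aadd, one_add]
      exact (memI x).mp hx
    · -- 1 ∈ I ∩ G
      refine ⟨(memI 1).mpr ?_, one_mem_G⟩
      rw [one_add]
      exact one_mem_addClosure _
    · -- I ∩ G closed under +
      intro x hx y hy
      have hxG := mem_G_iff.mp hx.2
      have hyG := mem_G_iff.mp hy.2
      have hxH : x ∈ H := hxG ▸ (memI x).mp hx.1
      have hyH : y ∈ H := hyG ▸ (memI y).mp hy.1
      refine ⟨(memI _).mpr ?_, mem_G_iff.mpr (add_mem_G hxG hyG)⟩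
      rw [add_mem_G hxG hyG]
      exact add_mem_addClosure hxH hyH
    · -- I ∩ G closed under neg
      intro x hx
      have hxG := mem_G_iff.mp hx.2
      have hxH : x ∈ H := hxG ▸ (memI x).mp hx.1
      refine ⟨(memI _).mpr ?_, mem_G_iff.mpr (neg_add_one x)⟩
      rw [neg_add_one]
      exact neg_mem_addClosure hxH
    · -- λ-invariance
      intro g hg x hx
      have hg' := mem_G_iff.mp hg
      have hlamH : H ⊆ {h : B | lam g h ∈ H} := by
        refine addClosure_subset ?_ ?_ ?_ ?_
        · rintro z ⟨a, -, b, hb, rfl⟩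
          show lam g (dot a b) ∈ H
          rw [lam_dot hg']
          exact hgen _ _ (hJlam g hg b hb)
        · show lam g 1 ∈ H
          rw [lam_g_one hg']
          exact one_mem_addClosure _
        · intro a ha b hb
          show lam g (a + b) ∈ H
          rw [lam_add]
          exact add_mem_addClosure ha hb
        · intro a ha
          show lam g (neg a) ∈ H
          rw [lam_neg hg']
          exact neg_mem_addClosure ha
      refine (memI _).mpr ?_
      rw [lam_gp hg']
      exact hlamH ((memI x).mp hx)
    · -- 1 ∈ I
      refine (memI 1).mpr ?_
      rw [one_add]
      exact one_mem_addClosure _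
    · -- closed under *
      intro x hx y hy
      refine (memI _).mpr ?_
      rw [gp_mul]
      exact add_mem_addClosure ((memI x).mp hx)
        (add_mem_addClosure (hgen x y (leftSeries_antitone n hy)) ((memI y).mp hy))
    · -- closed under ⁻¹
      intro x hx
      have hx1 : x + 1 ∈ H := (memI x).mp hx
      have hxinvJ : x⁻¹ ∈ J := hJcirc.2.2 x (leftSeries_antitone n hx)
      have hd : dot x x⁻¹ ∈ H := hgen x x⁻¹ hxinvJ
      have hu : (x + 1) + dot x x⁻¹ ∈ H := add_mem_addClosure hx1 hd
      have hgpG : (x + 1) + 1 = x + 1 := by rw [aadd, one_add]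
      have huG : ((x + 1) + dot x x⁻¹) + 1 = (x + 1) + dot x x⁻¹ :=
        add_mem_G hgpG (dot_mem_G x x⁻¹)
      have heq : ((x + 1) + dot x x⁻¹) + (x⁻¹ + 1) = 1 := by
        have h := gp_mul x x⁻¹
        rw [mul_inv_cancel, one_add, ← aadd] at h
        exact h.symm
      refine (memI _).mpr ?_
      rw [neg_eq_of_add huG heq]
      exact neg_mem_addClosure hu

end LeftSemiBrace
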